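/- arXiv:1403.2009 — 5 statements merged into one kernel-verified Lean document; each statement's English description precedes it below -/
import Mathlib

section
/- Let G be a finite simple graph with vertex set {u_1,...,u_n}. Construct an OLSE instance I_G as follows: order V(G) as u_1 < ... < u_n; let H be the edgeless graph on vertices v_1 < ... < v_n; and set L(u_i) = {v_i}. Then G has an independent set of size k if and only if I_G admits a valid OLSE embedding of a subgraph S of G with |S| = k. -/
/-- Reduction from Independent Set to OLSE: with `H = ⊥` (edgeless) on `Fin n`,
both naturally ordered, and `L(u_i) = {v_i}`, the graph `G` has an independent
set of size `k` iff the OLSE instance admits a valid embedding of a subgraph of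
size `k`. -/
theorem stmt3 (n k : ℕ) (G : SimpleGraph (Fin n)) :
    (∃ I : Finset (Fin n), I.card = k ∧ ∀ u ∈ I, ∀ v ∈ I, ¬ G.Adj u v) ↔
    (∃ (S : Finset (Fin n)) (φ : Fin n → Fin n), S.card = k ∧
      Set.InjOn φ ↑S ∧
      (∀ u ∈ S, φ u ∈ ({u} : Finset (Fin n))) ∧
      (∀ u ∈ S, ∀ u' ∈ S, u < u' → φ u < φ u') ∧
      (∀ u ∈ S, ∀ u' ∈ S, G.Adj u u' → (⊥ : SimpleGraph (Fin n)).Adj (φ u) (φ u'))) := by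
  constructor
  · rintro ⟨I, hcard, hind⟩
    exact ⟨I, id, hcard, Set.injOn_id _, fun u _ => by simp,
      fun u _ u' _ h => h, fun u hu u' hu' h => absurd h (hind u hu u' hu')⟩
  · rintro ⟨S, φ, hcard, _, _, _, hedge⟩
    exact ⟨S, hcard, fun u hu v hv h => (hedge u hu v hv h).elim⟩
end

section
/- Let G be a finite simple graph with vertex set {u_1,...,u_n}, and let H be the edgeless graph on {v_1,...,v_n} with L(u_i) = {v_i}, both ordered naturally. Then for every OLISE-valid embedding (requiring uu' ∈ E(G) iff φ(u)φ(u') ∈ E(H)), the embedded vertex set is an independent set of G of the same size, and conversely every independent set of G of size k yields an OLISE-valid embedding of size k. In particular the maximum OLISE solution size equals the independence number α(G). -/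
/-- For the OLISE instance with `H = ⊥` edgeless on `Fin n` and `L(u_i) = {v_i}`:
(a) the vertex set of any valid OLISE embedding is an independent set of `G`
(of the same size), and (b) every independent set of `G` of size `k` yields a
valid OLISE embedding of size `k`. -/
theorem stmt4 (n : ℕ) (G : SimpleGraph (Fin n)) :
    (∀ (S : Finset (Fin n)) (φ : Fin n → Fin n),
      Set.InjOn φ ↑S →
      (∀ u ∈ S, φ u ∈ ({u} : Finset (Fin n))) →
      (∀ u ∈ S, ∀ u' ∈ S, u < u' → φ u < φ u') →
      (∀ u ∈ S, ∀ u' ∈ S, (G.Adj u u' ↔ (⊥ : SimpleGraph (Fin n)).Adj (φ u) (φ u'))) →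
      (∀ u ∈ S, ∀ v ∈ S, ¬ G.Adj u v)) ∧
    (∀ (k : ℕ) (I : Finset (Fin n)), I.card = k → (∀ u ∈ I, ∀ v ∈ I, ¬ G.Adj u v) →
      ∃ φ : Fin n → Fin n, Set.InjOn φ ↑I ∧
        (∀ u ∈ I, φ u ∈ ({u} : Finset (Fin n))) ∧
        (∀ u ∈ I, ∀ u' ∈ I, u < u' → φ u < φ u') ∧
        (∀ u ∈ I, ∀ u' ∈ I, (G.Adj u u' ↔ (⊥ : SimpleGraph (Fin n)).Adj (φ u) (φ u')))) := by
  constructor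
  · intro S φ _ _ _ hadj u hu v hv hG
    exact ((hadj u hu v hv).mp hG).elim
  · intro k I _ hind
    exact ⟨id, Set.injOn_id _, fun u _ => by simp, fun u _ u' _ h => h,
      fun u hu u' hu' => by simp [hind u hu u' hu']⟩
end

section
/- Let P be a graph class closed under taking induced subgraphs, and let I = (V, E_P ∪ E_c) be a graph where (V, E_P) ∈ P and at most Δ conflict edges of E_c are incident to any vertex. Suppose the vertices of V are 2-colored green/red such that some independent set S of I of size k is entirely green and all E_c-neighbors of S are red. Then the set V_0 of green vertices that are E_c-isolated within the green subgraph contains S, and any maximum independent set of the induced subgraph (V_0, E_P restricted to V_0) is an independent set of I of size at least k. -/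
/-- Random separation correctness.  `I = (V, E_P ∪ E_c)`; `c` is a 2-coloring
(`true` = green, `false` = red).  If `S` is an independent set of `I` of size
`k`, entirely green, with all its conflict-neighbors red, then `S` is contained
in `V₀` (the green vertices with no green conflict-neighbor), `S` is
independent in `(V₀, E_P|V₀)`, every independent set of `(V₀, E_P|V₀)` is an
independent set of `I`, and any maximum independent set of `(V₀, E_P|V₀)` is an
independent set of `I` of size at least `k`. -/
theorem stmt9 {V : Type*} [Fintype V] [DecidableEq V]
    (EP EC : SimpleGraph V) (c : V → Bool) (S : Finset V) (k : ℕ)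
    (hcard : S.card = k)
    (hindep : ∀ u ∈ S, ∀ v ∈ S, ¬ EP.Adj u v ∧ ¬ EC.Adj u v)
    (hgreen : ∀ u ∈ S, c u = true)
    (hred : ∀ u ∈ S, ∀ w, EC.Adj u w → c w = false) :
    let V₀ : Set V := {v | c v = true ∧ ∀ w, EC.Adj v w → c w = false}
    (↑S ⊆ V₀) ∧
    (∀ u ∈ S, ∀ v ∈ S, ¬ EP.Adj u v) ∧
    (∀ T : Finset V, ↑T ⊆ V₀ → (∀ u ∈ T, ∀ v ∈ T, ¬ EP.Adj u v) →
      ∀ u ∈ T, ∀ v ∈ T, ¬ EP.Adj u v ∧ ¬ EC.Adj u v) ∧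
    (∀ T : Finset V, ↑T ⊆ V₀ → (∀ u ∈ T, ∀ v ∈ T, ¬ EP.Adj u v) →
      (∀ T' : Finset V, ↑T' ⊆ V₀ → (∀ u ∈ T', ∀ v ∈ T', ¬ EP.Adj u v) →
        T'.card ≤ T.card) →
      k ≤ T.card ∧ ∀ u ∈ T, ∀ v ∈ T, ¬ EP.Adj u v ∧ ¬ EC.Adj u v) := by
  intro V₀
  have hSsub : ↑S ⊆ V₀ := by
    intro u hu
    exact ⟨hgreen u hu, hred u hu⟩
  have hSP : ∀ u ∈ S, ∀ v ∈ S, ¬ EP.Adj u v := fun u hu v hv => (hindep u hu v hv).1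
  have hT : ∀ T : Finset V, ↑T ⊆ V₀ → (∀ u ∈ T, ∀ v ∈ T, ¬ EP.Adj u v) →
      ∀ u ∈ T, ∀ v ∈ T, ¬ EP.Adj u v ∧ ¬ EC.Adj u v := by
    intro T hTsub hTP u hu v hv
    refine ⟨hTP u hu v hv, fun hadj => ?_⟩
    have h1 := (hTsub hu).2 v hadj
    have h2 := (hTsub hv).1
    rw [h1] at h2; exact Bool.noConfusion h2
  refine ⟨hSsub, hSP, hT, ?_⟩
  intro T hTsub hTP hmax
  refine ⟨?_, hT T hTsub hTP⟩
  have := hmax S hSsub hSP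
  omega
end

section
/- Let (G, H, ≺_G, ≺_H, L) be an OLSE instance in which V(G) is partitioned, according to a fixed valid partial embedding φ_C of a set S_C = {u_{i_1} ≺ ... ≺ u_{i_r}} ⊆ V(G) with images φ_C(u_{i_1}) ≺_H ... ≺_H φ_C(u_{i_r}), into intervals I_0,...,I_r of G (by the positions of the u_{i_j}) and H into intervals I'_0,...,I'_r (by the positions of the φ_C(u_{i_j})). Suppose each I_j is an independent set of G, and suppose every vertex u ∈ I_j and every v ∈ L(u) ∩ I'_j satisfy all adjacency and order constraints with respect to S_C and φ_C. Then the union of S_C with independently chosen order-preserving list injections φ_j : S_j → I'_j (S_j ⊆ I_j, φ_j(u) ∈ L(u)) is a valid OLSE embedding of S_C ∪ S_0 ∪ ... ∪ S_r; hence the maximum OLSE solution extending (S_C, φ_C) has size r + Σ_j opt_j, where opt_j is the maximum size of an order-preserving list injection from I_j into I'_j. -/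
/-- Interval decomposition for the vertex-cover parameterization of OLSE.
`φC` is a fixed valid partial embedding of `SC`; the vertices outside `SC`
form an independent set; a vertex `u ∉ SC` with `v ∈ L u` lying in the interval
of `H` corresponding to `u`'s interval of `G` (expressed by the order
compatibility condition with every `w ∈ SC`) satisfies all adjacency
constraints with respect to `SC`.  Then the union of `φC` with any
interval-respecting order-preserving list injection `φ` on `S ⊆ V(G) \ SC`
is a valid OLSE embedding of `SC ∪ S`, of size `|SC| + |S|`. -/
theorem stmt13 {VG VH : Type*} [LinearOrder VG] [LinearOrder VH]
    (G : SimpleGraph VG) (H : SimpleGraph VH) (L : VG → Finset VH)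
    (SC : Finset VG) (φC : VG → VH)
    (hinjC : Set.InjOn φC ↑SC)
    (hlistC : ∀ u ∈ SC, φC u ∈ L u)
    (hordC : ∀ u ∈ SC, ∀ u' ∈ SC, u < u' → φC u < φC u')
    (hedgeC : ∀ u ∈ SC, ∀ u' ∈ SC, G.Adj u u' → H.Adj (φC u) (φC u'))
    (hIndep : ∀ u v : VG, u ∉ SC → v ∉ SC → ¬ G.Adj u v)
    (hAdjOK : ∀ u ∉ SC, ∀ v ∈ L u,
      (∀ w ∈ SC, (u < w ↔ v < φC w) ∧ (w < u ↔ φC w < v)) →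
      ∀ w ∈ SC, G.Adj u w → H.Adj v (φC w))
    (S : Finset VG) (hdisj : ∀ u ∈ S, u ∉ SC)
    (φ : VG → VH)
    (hlist : ∀ u ∈ S, φ u ∈ L u)
    (hcomp : ∀ u ∈ S, ∀ w ∈ SC, (u < w ↔ φ u < φC w) ∧ (w < u ↔ φC w < φ u))
    (hinj : Set.InjOn φ ↑S)
    (hord : ∀ u ∈ S, ∀ u' ∈ S, u < u' →
      (∀ w ∈ SC, (u < w ↔ u' < w)) → φ u < φ u') :
    let Φ : VG → VH := fun x => if x ∈ SC then φC x else φ x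
    Set.InjOn Φ ↑(SC ∪ S) ∧
    (∀ u ∈ SC ∪ S, Φ u ∈ L u) ∧
    (∀ u ∈ SC ∪ S, ∀ u' ∈ SC ∪ S, u < u' → Φ u < Φ u') ∧
    (∀ u ∈ SC ∪ S, ∀ u' ∈ SC ∪ S, G.Adj u u' → H.Adj (Φ u) (Φ u')) ∧
    (SC ∪ S).card = SC.card + S.card := by
  intro Φ
  have hΦ : ∀ x, x ∈ SC → Φ x = φC x := fun x hx => if_pos hx
  have hΦ' : ∀ x, x ∉ SC → Φ x = φ x := fun x hx => if_neg hx
  have horder : ∀ u ∈ SC ∪ S, ∀ u' ∈ SC ∪ S, u < u' → Φ u < Φ u' := by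
    intro u hu u' hu' hlt
    rcases Finset.mem_union.mp hu with h1 | h1 <;>
      rcases Finset.mem_union.mp hu' with h2 | h2
    · rw [hΦ u h1, hΦ u' h2]; exact hordC u h1 u' h2 hlt
    · rw [hΦ u h1, hΦ' u' (hdisj u' h2)]
      exact ((hcomp u' h2 u h1).2).mp hlt
    · rw [hΦ' u (hdisj u h1), hΦ u' h2]
      exact ((hcomp u h1 u' h2).1).mp hlt
    · rw [hΦ' u (hdisj u h1), hΦ' u' (hdisj u' h2)]
      by_cases hsame : ∀ w ∈ SC, (u < w ↔ u' < w)
      · exact hord u h1 u' h2 hlt hsame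
      · push_neg at hsame
        obtain ⟨w, hw, hiff⟩ := hsame
        rcases hiff with ⟨huw, hle⟩ | ⟨hwu, hu'w⟩
        · have hwu' : w < u' := lt_of_le_of_ne hle (fun h => hdisj u' h2 (h ▸ hw))
          exact lt_trans ((hcomp u h1 w hw).1.mp huw) ((hcomp u' h2 w hw).2.mp hwu')
        · exact absurd (lt_trans hlt hu'w) (not_lt.mpr hwu)
  refine ⟨?_, ?_, horder, ?_, ?_⟩
  · intro x hx y hy hxy
    by_contra hne
    rcases lt_or_gt_of_ne hne with h | h
    · exact absurd hxy (ne_of_lt (horder x (Finset.mem_coe.mp hx) y (Finset.mem_coe.mp hy) h))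
    · exact absurd hxy.symm (ne_of_lt (horder y (Finset.mem_coe.mp hy) x (Finset.mem_coe.mp hx) h))
  · intro u hu
    rcases Finset.mem_union.mp hu with h | h
    · rw [hΦ u h]; exact hlistC u h
    · rw [hΦ' u (hdisj u h)]; exact hlist u h
  · intro u hu u' hu' hadj
    rcases Finset.mem_union.mp hu with h1 | h1 <;>
      rcases Finset.mem_union.mp hu' with h2 | h2
    · rw [hΦ u h1, hΦ u' h2]; exact hedgeC u h1 u' h2 hadj
    · rw [hΦ u h1, hΦ' u' (hdisj u' h2)]
      exact (hAdjOK u' (hdisj u' h2) (φ u') (hlist u' h2) (hcomp u' h2) u h1 hadj.symm).symm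
    · rw [hΦ' u (hdisj u h1), hΦ u' h2]
      exact hAdjOK u (hdisj u h1) (φ u) (hlist u h1) (hcomp u h1) u' h2 hadj
    · exact absurd hadj (hIndep u u' (hdisj u h1) (hdisj u' h2))
  · rw [Finset.card_union_of_disjoint (Finset.disjoint_left.mpr (fun a ha hb => hdisj a hb ha))]
end

section
/- Let G be a graph with Δ(G) ≤ 1 and H edgeless, with L : V(G) → 2^{V(H)} of width 1 (no vertex orders). Define S_i = L^{-1}(v_i) for each v_i ∈ V(H); these sets are pairwise disjoint. Then the simplification rule is safe: if some S_i contains a vertex u that is isolated in G or has its unique neighbor inside S_i, then there is a maximum solution of the unordered LSE instance containing u with φ(u) = v_i; formally, max-LSE(instance) = 1 + max-LSE(instance with S_i and v_i deleted). -/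
/-- Optimum of the unordered LSE instance with `H` edgeless, restricted to the
remaining vertex sets `A ⊆ V(G)` and `B ⊆ V(H)`: the maximum size of an
independent subgraph of `G` inside `A` admitting a list injection into `B`. -/
noncomputable def optLSE {VG VH : Type*} (G : SimpleGraph VG)
    (L : VG → Finset VH) (A : Finset VG) (B : Finset VH) : ℕ :=
  sSup {n : ℕ | ∃ (S : Finset VG) (φ : VG → VH), S ⊆ A ∧ S.card = n ∧
    Set.InjOn φ ↑S ∧ (∀ u ∈ S, φ u ∈ L u ∧ φ u ∈ B) ∧
    (∀ u ∈ S, ∀ u' ∈ S, ¬ G.Adj u u')}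

/-- Safety of simplification rule (i): for `Δ(G) ≤ 1`, `H` edgeless, lists of
width 1, if `S_i = L⁻¹(v)` contains a vertex `u` that is isolated in `G` or
whose unique neighbor lies inside `S_i`, then committing `u ↦ v` and deleting
`S_i` and `v` is safe: the optimum of the instance equals one plus the optimum
of the reduced instance. -/
theorem stmt17 {VG VH : Type*} [Fintype VG] [Fintype VH]
    [DecidableEq VG] [DecidableEq VH]
    (G : SimpleGraph VG) (L : VG → Finset VH)
    (hG : ∀ u v w, G.Adj u v → G.Adj u w → v = w)
    (hL : ∀ u, (L u).card ≤ 1)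
    (v : VH) (u : VG) (hu : v ∈ L u)
    (hcond : (∀ w, ¬ G.Adj u w) ∨ (∃ w, G.Adj u w ∧ v ∈ L w)) :
    optLSE G L Finset.univ Finset.univ =
      1 + optLSE G L (Finset.univ \ Finset.univ.filter fun x => v ∈ L x)
            (Finset.univ \ {v}) := by
  classical
  set F : Finset VG := Finset.univ.filter fun x => v ∈ L x with hF
  have hmemF : ∀ x, x ∈ F ↔ v ∈ L x := by intro x; simp [hF]
  set A2 : Finset VG := Finset.univ \ F with hA2
  set B2 : Finset VH := Finset.univ \ {v} with hB2
  set T1 : Set ℕ := {n : ℕ | ∃ (S : Finset VG) (φ : VG → VH),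
    S ⊆ Finset.univ ∧ S.card = n ∧ Set.InjOn φ ↑S ∧
    (∀ u ∈ S, φ u ∈ L u ∧ φ u ∈ Finset.univ) ∧
    (∀ u ∈ S, ∀ u' ∈ S, ¬ G.Adj u u')} with hT1
  set T2 : Set ℕ := {n : ℕ | ∃ (S : Finset VG) (φ : VG → VH),
    S ⊆ A2 ∧ S.card = n ∧ Set.InjOn φ ↑S ∧
    (∀ u ∈ S, φ u ∈ L u ∧ φ u ∈ B2) ∧
    (∀ u ∈ S, ∀ u' ∈ S, ¬ G.Adj u u')} with hT2
  have hopt1 : optLSE G L Finset.univ Finset.univ = sSup T1 := rfl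
  have hopt2 : optLSE G L A2 B2 = sSup T2 := rfl
  rw [hopt1, hopt2]
  have hbdd1 : BddAbove T1 := by
    refine ⟨Fintype.card VG, ?_⟩
    rintro n ⟨S, φ, _, hc, _⟩
    exact hc ▸ S.card_le_univ
  have hbdd2 : BddAbove T2 := by
    refine ⟨Fintype.card VG, ?_⟩
    rintro n ⟨S, φ, _, hc, _⟩
    exact hc ▸ S.card_le_univ
  have hne1 : T1.Nonempty := ⟨0, ∅, fun _ => v, by simp⟩
  have hne2 : T2.Nonempty := ⟨0, ∅, fun _ => v, by simp⟩
  apply le_antisymm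
  · -- ≤ : from any full solution remove the (≤ 1) vertices of S ∩ F
    refine csSup_le hne1 ?_
    rintro n ⟨S, φ, _, hcard, hinj, hmap, hadj⟩
    have hcardF : (S ∩ F).card ≤ 1 := by
      rw [Finset.card_le_one]
      intro a ha b hb
      have hva : φ a = v :=
        Finset.card_le_one.1 (hL a) _ (hmap a (Finset.mem_inter.1 ha).1).1 _
          ((hmemF a).1 (Finset.mem_inter.1 ha).2)
      have hvb : φ b = v :=
        Finset.card_le_one.1 (hL b) _ (hmap b (Finset.mem_inter.1 hb).1).1 _
          ((hmemF b).1 (Finset.mem_inter.1 hb).2)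
      exact hinj (Finset.mem_inter.1 ha).1 (Finset.mem_inter.1 hb).1 (by rw [hva, hvb])
    have hmem2 : (S \ F).card ∈ T2 := by
      refine ⟨S \ F, φ, ?_, rfl, hinj.mono (by exact_mod_cast Finset.sdiff_subset), ?_, ?_⟩
      · intro x hx
        simp only [hA2, Finset.mem_sdiff] at hx ⊢
        exact ⟨Finset.mem_univ x, hx.2⟩
      · intro x hx
        have hxS := (Finset.mem_sdiff.1 hx).1
        have hxF := (Finset.mem_sdiff.1 hx).2
        refine ⟨(hmap x hxS).1, ?_⟩
        simp only [hB2, Finset.mem_sdiff, Finset.mem_singleton]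
        refine ⟨Finset.mem_univ _, ?_⟩
        intro hφ
        exact hxF ((hmemF x).2 (hφ ▸ (hmap x hxS).1))
      · intro x hx y hy
        exact hadj x (Finset.mem_sdiff.1 hx).1 y (Finset.mem_sdiff.1 hy).1
    have h1 : (S \ F).card ≤ sSup T2 := le_csSup hbdd2 hmem2
    have h2 : n ≤ (S ∩ F).card + (S \ F).card := by
      rw [Finset.card_inter_add_card_sdiff]
      omega
    omega
  · -- ≥ : extend a maximum reduced solution with u ↦ v
    obtain ⟨S2, φ2, hS2A, hS2card, hS2inj, hS2map, hS2adj⟩ := Nat.sSup_mem hne2 hbdd2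
    have huF : u ∈ F := (hmemF u).2 hu
    have huS2 : u ∉ S2 := fun h => (Finset.mem_sdiff.1 (hS2A h)).2 huF
    set φ1 : VG → VH := Function.update φ2 u v with hφ1
    have hφ1u : φ1 u = v := by simp [hφ1]
    have hφ1x : ∀ x ∈ S2, φ1 x = φ2 x := by
      intro x hx
      have : x ≠ u := fun h => huS2 (h ▸ hx)
      simp [hφ1, Function.update_of_ne this]
    have hS2v : ∀ x ∈ S2, φ2 x ≠ v := by
      intro x hx hxv
      have := (hS2map x hx).2
      simp [hB2, hxv] at this
    have hnoadj : ∀ x ∈ S2, ¬ G.Adj u x := by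
      intro x hx hadjux
      rcases hcond with hiso | ⟨w, hw, hvw⟩
      · exact hiso x hadjux
      · have : w = x := hG u w x hw hadjux
        subst this
        exact (Finset.mem_sdiff.1 (hS2A hx)).2 ((hmemF w).2 hvw)
    have hmem1 : (1 + sSup T2) ∈ T1 := by
      refine ⟨insert u S2, φ1, Finset.subset_univ _, ?_, ?_, ?_, ?_⟩
      · rw [Finset.card_insert_of_notMem huS2, hS2card]; omega
      · intro x hx y hy hxy
        simp only [Finset.coe_insert, Set.mem_insert_iff, Finset.mem_coe] at hx hy
        rcases hx with rfl | hx <;> rcases hy with rfl | hy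
        · rfl
        · exact absurd (hxy.symm.trans hφ1u) (by rw [hφ1x y hy]; exact hS2v y hy)
        · exact absurd (hxy.trans hφ1u) (by rw [hφ1x x hx]; exact hS2v x hx)
        · exact hS2inj hx hy (by rwa [hφ1x x hx, hφ1x y hy] at hxy)
      · intro x hx
        rcases Finset.mem_insert.1 hx with rfl | hx
        · exact ⟨hφ1u ▸ hu, Finset.mem_univ _⟩
        · exact ⟨(hφ1x x hx).symm ▸ (hS2map x hx).1, Finset.mem_univ _⟩
      · intro x hx y hy
        rcases Finset.mem_insert.1 hx with hxu | hxS <;>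
          rcases Finset.mem_insert.1 hy with hyu | hyS
        · rw [hxu, hyu]; exact G.irrefl
        · rw [hxu]; exact hnoadj y hyS
        · rw [hyu]; exact fun h => hnoadj x hxS h.symm
        · exact hS2adj x hxS y hyS
    exact le_csSup hbdd1 hmem1
end
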